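/- Assume: (i) the gradient operator of the modified 4-player game is α-strongly monotone on Z for every payoff pair; (ii) each D_i is symmetric, satisfies the triangle inequality, and satisfies D_i(x, y) ≤ L‖x − y‖₂ on the relevant simplex; (iii) ρ is a map assigning to every payoff pair R a Nash equilibrium ρ(R) of the modified 4-player game with payoff pair R, and RQE_i(R) := J_i(ρ(R); R). Let S be a nonempty finite set, let r₁, r₂ : S × (A₁ × A₂) → ℝ where |A₁| = a₁ and |A₂| = a₂, let P : S × (A₁ × A₂) → Δ_S, let D₁^env, D₂^env : Δ_S × Δ_S → ℝ be bounded below, and let γ ∈ [0, 1). For a pair Q = (Q₁, Q₂) with Q_i : S × (A₁ × A₂) → ℝ, viewing (Q₁(s, ·), Q₂(s, ·)) as a payoff pair (with Q₂(s,·) transposed appropriately), define the risk-averse quantal-response Bellman operator (T Q)_i(s, a) = r_i(s, a) + γ·inf_{P̃ ∈ Δ_S} { −Σ_{s'} P̃(s')·RQE_i(Q(s', ·)) + D_i^env(P̃, P(· | s, a)) }. Then for all pairs Q, Q': ‖T Q − T Q'‖_∞ ≤ γ·(1 + 2L(√a₁ + √a₂)/α)·‖Q − Q'‖_∞, where ‖·‖_∞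 is the maximum of absolute values over i, s and joint actions a. In particular, if γ ≤ α/(α + 2L(√a₁ + √a₂)) then ‖T Q − T Q'‖_∞ ≤ ‖Q − Q'‖_∞, and T is a contraction whenever this inequality on γ is strict. -/

import Mathlib

noncomputable section

/-- `ℝⁿ` with the Euclidean norm. -/
abbrev Vec (n : ℕ) := EuclideanSpace ℝ (Fin n)

/-- The standard simplex `Δₙ = {x : xⱼ ≥ 0, ∑ⱼ xⱼ = 1}`. -/
def Δ (n : ℕ) : Set (Vec n) := {x | (∀ j, 0 ≤ x j) ∧ ∑ j, x j = 1}

/-- Matrix–vector product `M x`. -/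
def mv {m n : ℕ} (M : Matrix (Fin m) (Fin n) ℝ) (x : Vec n) : Vec m :=
  WithLp.toLp 2 (fun k => ∑ j, M k j * x j)

/-- Joint strategy space of the modified 4-player game: `z = (π₁, π₂, p₁, p₂)`. -/
abbrev Joint (a₁ a₂ : ℕ) := Vec a₁ × Vec a₂ × Vec a₂ × Vec a₁

/-- Membership in `Z = Δ_{a₁} × Δ_{a₂} × Δ_{a₂} × Δ_{a₁}`. -/
def inZ {a₁ a₂ : ℕ} (z : Joint a₁ a₂) : Prop :=
  z.1 ∈ Δ a₁ ∧ z.2.1 ∈ Δ a₂ ∧ z.2.2.1 ∈ Δ a₂ ∧ z.2.2.2 ∈ Δ a₁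

/-- The standard inner product on the joint space. -/
def jip {a₁ a₂ : ℕ} (z w : Joint a₁ a₂) : ℝ :=
  (inner ℝ z.1 w.1 : ℝ) + (inner ℝ z.2.1 w.2.1 : ℝ)
    + (inner ℝ z.2.2.1 w.2.2.1 : ℝ) + (inner ℝ z.2.2.2 w.2.2.2 : ℝ)

/-- The squared Euclidean norm on the joint space. -/
def jnormSq {a₁ a₂ : ℕ} (z : Joint a₁ a₂) : ℝ :=
  ‖z.1‖ ^ 2 + ‖z.2.1‖ ^ 2 + ‖z.2.2.1‖ ^ 2 + ‖z.2.2.2‖ ^ 2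

/-- Objective `J₁(z; R) = −π₁ᵀ R₁ p₁ − D₁(p₁, π₂) + ε₁ ν₁(π₁)` of player 1. -/
def J1 {a₁ a₂ : ℕ} (ε₁ : ℝ) (ν₁ : Vec a₁ → ℝ) (D₁ : Vec a₂ → Vec a₂ → ℝ)
    (R₁ : Matrix (Fin a₁) (Fin a₂) ℝ) (z : Joint a₁ a₂) : ℝ :=
  -(inner ℝ z.1 (mv R₁ z.2.2.1) : ℝ) - D₁ z.2.2.1 z.2.1 + ε₁ * ν₁ z.1

/-- Objective `J₂(z; R) = −π₂ᵀ R₂ p₂ − D₂(p₂, π₁) + ε₂ ν₂(π₂)` of player 2. -/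
def J2 {a₁ a₂ : ℕ} (ε₂ : ℝ) (ν₂ : Vec a₂ → ℝ) (D₂ : Vec a₁ → Vec a₁ → ℝ)
    (R₂ : Matrix (Fin a₂) (Fin a₁) ℝ) (z : Joint a₁ a₂) : ℝ :=
  -(inner ℝ z.2.1 (mv R₂ z.2.2.2) : ℝ) - D₂ z.2.2.2 z.1 + ε₂ * ν₂ z.2.1

/-- Nash equilibrium of the modified 4-player game: each of the four components minimizes
its owner's objective over its simplex, the others fixed (`J̄ᵢ = −Jᵢ` for the adversaries). -/
def IsNash {a₁ a₂ : ℕ} (ε₁ ε₂ : ℝ) (ν₁ : Vec a₁ → ℝ) (ν₂ : Vec a₂ → ℝ)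
    (D₁ : Vec a₂ → Vec a₂ → ℝ) (D₂ : Vec a₁ → Vec a₁ → ℝ)
    (R₁ : Matrix (Fin a₁) (Fin a₂) ℝ) (R₂ : Matrix (Fin a₂) (Fin a₁) ℝ)
    (z : Joint a₁ a₂) : Prop :=
  inZ z
    ∧ (∀ q ∈ Δ a₁, J1 ε₁ ν₁ D₁ R₁ z ≤ J1 ε₁ ν₁ D₁ R₁ (q, z.2.1, z.2.2.1, z.2.2.2))
    ∧ (∀ q ∈ Δ a₂, J2 ε₂ ν₂ D₂ R₂ z ≤ J2 ε₂ ν₂ D₂ R₂ (z.1, q, z.2.2.1, z.2.2.2))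
    ∧ (∀ q ∈ Δ a₂, -J1 ε₁ ν₁ D₁ R₁ z ≤ -J1 ε₁ ν₁ D₁ R₁ (z.1, z.2.1, q, z.2.2.2))
    ∧ (∀ q ∈ Δ a₁, -J2 ε₂ ν₂ D₂ R₂ z ≤ -J2 ε₂ ν₂ D₂ R₂ (z.1, z.2.1, z.2.2.1, q))

/-- The gradient operator `F(z; R)` of the modified 4-player game. -/
def Fop {a₁ a₂ : ℕ} (ε₁ ε₂ : ℝ) (ν₁ : Vec a₁ → ℝ) (ν₂ : Vec a₂ → ℝ)
    (D₁ : Vec a₂ → Vec a₂ → ℝ) (D₂ : Vec a₁ → Vec a₁ → ℝ)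
    (R₁ : Matrix (Fin a₁) (Fin a₂) ℝ) (R₂ : Matrix (Fin a₂) (Fin a₁) ℝ)
    (z : Joint a₁ a₂) : Joint a₁ a₂ :=
  (-(mv R₁ z.2.2.1) + ε₁ • gradient ν₁ z.1,
   -(mv R₂ z.2.2.2) + ε₂ • gradient ν₂ z.2.1,
   mv R₁.transpose z.1 + gradient (fun p => D₁ p z.2.1) z.2.2.1,
   mv R₂.transpose z.2.1 + gradient (fun p => D₂ p z.1) z.2.2.2)

/-- `α`-strong monotonicity of the gradient operator on `Z`. -/
def StronglyMonotoneOnZ {a₁ a₂ : ℕ} (α ε₁ ε₂ : ℝ) (ν₁ : Vec a₁ → ℝ) (ν₂ : Vec a₂ → ℝ)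
    (D₁ : Vec a₂ → Vec a₂ → ℝ) (D₂ : Vec a₁ → Vec a₁ → ℝ)
    (R₁ : Matrix (Fin a₁) (Fin a₂) ℝ) (R₂ : Matrix (Fin a₂) (Fin a₁) ℝ) : Prop :=
  ∀ z z' : Joint a₁ a₂, inZ z → inZ z' →
    α * jnormSq (z - z')
      ≤ jip (z - z') (Fop ε₁ ε₂ ν₁ ν₂ D₁ D₂ R₁ R₂ z - Fop ε₁ ε₂ ν₁ ν₂ D₁ D₂ R₁ R₂ z')

/-- Strict monotonicity of the gradient operator on `Z`. -/
def StrictlyMonotoneOnZ {a₁ a₂ : ℕ} (ε₁ ε₂ : ℝ) (ν₁ : Vec a₁ → ℝ) (ν₂ : Vec a₂ → ℝ)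
    (D₁ : Vec a₂ → Vec a₂ → ℝ) (D₂ : Vec a₁ → Vec a₁ → ℝ)
    (R₁ : Matrix (Fin a₁) (Fin a₂) ℝ) (R₂ : Matrix (Fin a₂) (Fin a₁) ℝ) : Prop :=
  ∀ z z' : Joint a₁ a₂, inZ z → inZ z' → z ≠ z' →
    0 < jip (z - z') (Fop ε₁ ε₂ ν₁ ν₂ D₁ D₂ R₁ R₂ z - Fop ε₁ ε₂ ν₁ ν₂ D₁ D₂ R₁ R₂ z')

/-- Entrywise `L∞` distance between payoff pairs. -/
def Rdist {a₁ a₂ : ℕ} (R₁ R₁' : Matrix (Fin a₁) (Fin a₂) ℝ)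
    (R₂ R₂' : Matrix (Fin a₂) (Fin a₁) ℝ) : ℝ :=
  max (⨆ kj : Fin a₁ × Fin a₂, |R₁ kj.1 kj.2 - R₁' kj.1 kj.2|)
      (⨆ kj : Fin a₂ × Fin a₁, |R₂ kj.1 kj.2 - R₂' kj.1 kj.2|)

/-- Payoff matrix of player 1 extracted from the `Q`-function pair at state `s`. -/
def QtoR1 {a₁ a₂ : ℕ} {S : Type*}
    (Q : (S × (Fin a₁ × Fin a₂) → ℝ) × (S × (Fin a₁ × Fin a₂) → ℝ)) (s : S) :
    Matrix (Fin a₁) (Fin a₂) ℝ :=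
  Matrix.of fun k j => Q.1 (s, (k, j))

/-- Payoff matrix of player 2 (transposed appropriately) extracted from the `Q`-function
pair at state `s`. -/
def QtoR2 {a₁ a₂ : ℕ} {S : Type*}
    (Q : (S × (Fin a₁ × Fin a₂) → ℝ) × (S × (Fin a₁ × Fin a₂) → ℝ)) (s : S) :
    Matrix (Fin a₂) (Fin a₁) ℝ :=
  Matrix.of fun j k => Q.2 (s, (k, j))

/-- The risk-averse quantal-response Bellman operator
`(T Q)ᵢ(s, a) = rᵢ(s, a) + γ · inf_{P̃ ∈ Δ_S} { −∑_{s'} P̃(s') RQEᵢ(Q(s',·)) + Dᵢᵉⁿᵛ(P̃, P(·|s,a)) }`,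
where `RQEᵢ(R) := Jᵢ(ρ(R); R)` for a Nash-equilibrium selector `ρ`. -/
def rqBellman {a₁ a₂ : ℕ} {S : Type*} [Fintype S]
    (ε₁ ε₂ : ℝ) (ν₁ : Vec a₁ → ℝ) (ν₂ : Vec a₂ → ℝ)
    (D₁ : Vec a₂ → Vec a₂ → ℝ) (D₂ : Vec a₁ → Vec a₁ → ℝ)
    (ρ : Matrix (Fin a₁) (Fin a₂) ℝ → Matrix (Fin a₂) (Fin a₁) ℝ → Joint a₁ a₂)
    (γ : ℝ) (r₁ r₂ : S × (Fin a₁ × Fin a₂) → ℝ)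
    (P : S × (Fin a₁ × Fin a₂) → S → ℝ)
    (D₁env D₂env : (S → ℝ) → (S → ℝ) → ℝ)
    (Q : (S × (Fin a₁ × Fin a₂) → ℝ) × (S × (Fin a₁ × Fin a₂) → ℝ)) :
    (S × (Fin a₁ × Fin a₂) → ℝ) × (S × (Fin a₁ × Fin a₂) → ℝ) :=
  (fun sa => r₁ sa + γ * ⨅ Pt : stdSimplex ℝ S,
      (-(∑ s', (Pt : S → ℝ) s' *
            J1 ε₁ ν₁ D₁ (QtoR1 Q s') (ρ (QtoR1 Q s') (QtoR2 Q s')))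
        + D₁env Pt (P sa)),
   fun sa => r₂ sa + γ * ⨅ Pt : stdSimplex ℝ S,
      (-(∑ s', (Pt : S → ℝ) s' *
            J2 ε₂ ν₂ D₂ (QtoR2 Q s') (ρ (QtoR1 Q s') (QtoR2 Q s')))
        + D₂env Pt (P sa)))

/-!
A Nash equilibrium `z` of the modified game solves the variational inequality
`⟨w - z, F(z; R)⟩ ≥ 0` on `Z`: each of the four components satisfies the first-order optimality
condition of its own problem on a simplex. Adding the inequalities for the equilibria `z, z'` of
two payoff pairs `R, R'` to the strong monotonicity of `F(·; R)` leaves only the payoff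
perturbation: `α ‖z - z'‖ ≤ ‖F(z'; R') - F(z'; R)‖ ≤ 2 (√a₁ + √a₂) ‖R - R'‖_∞`.
Letting player `i` deviate to the other equilibrium's strategy and adversary `i` to this one's,
`RQEᵢ` moves by at most `‖R - R'‖_∞` plus `L` times the displacement of the opponent's strategy
(triangle inequality and Lipschitz bound for `Dᵢ`), so `RQEᵢ` is
`(1 + 2L(√a₁ + √a₂)/α)`-Lipschitz. Infima of two families that are uniformly `c`-close are
`c`-close, and the discount `γ` multiplies this bound.
-/

open InnerProductSpace

lemma abs_sum_mul_le_of_sum_eq_one {ι : Type*} [Fintype ι] {w V : ι → ℝ} {c : ℝ}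
    (hw : ∀ i, 0 ≤ w i) (hw1 : ∑ i, w i = 1) (hV : ∀ i, |V i| ≤ c) :
    |∑ i, w i * V i| ≤ c :=
  calc |∑ i, w i * V i| ≤ ∑ i, |w i * V i| := Finset.abs_sum_le_sum_abs _ _
    _ ≤ ∑ i, w i * c := Finset.sum_le_sum fun i _ => by
        rw [abs_mul, abs_of_nonneg (hw i)]; exact mul_le_mul_of_nonneg_left (hV i) (hw i)
    _ = c := by rw [← Finset.sum_mul, hw1, one_mul]

lemma convex_Δ (n : ℕ) : Convex ℝ (Δ n) := by
  intro x ⟨hx0, hx1⟩ y ⟨hy0, hy1⟩ a b ha hb hab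
  refine ⟨fun j => ?_, ?_⟩
  · simp only [PiLp.add_apply, PiLp.smul_apply, smul_eq_mul]
    have := hx0 j; have := hy0 j; positivity
  · simp only [PiLp.add_apply, PiLp.smul_apply, smul_eq_mul, Finset.sum_add_distrib,
      ← Finset.mul_sum, hx1, hy1, mul_one, hab]

lemma mv_sub {m n : ℕ} (A B : Matrix (Fin m) (Fin n) ℝ) (x : Vec n) :
    mv (A - B) x = mv A x - mv B x := by
  ext k
  simp [mv, sub_mul, Finset.sum_sub_distrib]

lemma real_inner_mv_transpose {m n : ℕ} (M : Matrix (Fin m) (Fin n) ℝ) (x : Vec m) (p : Vec n) :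
    ⟪mv M.transpose x, p⟫_ℝ = ⟪x, mv M p⟫_ℝ := by
  simp only [PiLp.inner_apply, RCLike.inner_apply, conj_trivial, mv, Matrix.transpose_apply,
    Finset.sum_mul, Finset.mul_sum]
  rw [Finset.sum_comm]
  exact Finset.sum_congr rfl fun _ _ => Finset.sum_congr rfl fun _ _ => by ring

lemma abs_mv_apply_le {m n : ℕ} {M : Matrix (Fin m) (Fin n) ℝ} {p : Vec n} {δ : ℝ}
    (hM : ∀ k j, |M k j| ≤ δ) (hp : p ∈ Δ n) (k : Fin m) : |mv M p k| ≤ δ := by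
  simpa only [mv, mul_comm (M k _)] using abs_sum_mul_le_of_sum_eq_one hp.1 hp.2 (hM k)

lemma abs_inner_mv_le {m n : ℕ} {M : Matrix (Fin m) (Fin n) ℝ} {q : Vec m} {p : Vec n} {δ : ℝ}
    (hM : ∀ k j, |M k j| ≤ δ) (hq : q ∈ Δ m) (hp : p ∈ Δ n) : |⟪q, mv M p⟫_ℝ| ≤ δ := by
  simpa only [PiLp.inner_apply, RCLike.inner_apply, conj_trivial, mul_comm (mv M p _)] using
    abs_sum_mul_le_of_sum_eq_one hq.1 hq.2 (abs_mv_apply_le hM hp)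

lemma norm_le_sqrt_card_mul {n : ℕ} {v : Vec n} {c : ℝ} (hc : 0 ≤ c) (h : ∀ k, |v k| ≤ c) :
    ‖v‖ ≤ Real.sqrt n * c := by
  rw [EuclideanSpace.norm_eq, ← Real.sqrt_sq hc, ← Real.sqrt_mul (Nat.cast_nonneg n)]
  gcongr
  calc ∑ k, ‖v k‖ ^ 2 ≤ ∑ _k : Fin n, c ^ 2 := Finset.sum_le_sum fun k _ => by
        rw [Real.norm_eq_abs, sq_abs]; exact sq_le_sq' (abs_le.1 (h k)).1 (abs_le.1 (h k)).2
    _ = n * c ^ 2 := by simp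

lemma norm_mv_le {m n : ℕ} {M : Matrix (Fin m) (Fin n) ℝ} {p : Vec n} {δ : ℝ} (hδ : 0 ≤ δ)
    (hM : ∀ k j, |M k j| ≤ δ) (hp : p ∈ Δ n) : ‖mv M p‖ ≤ Real.sqrt m * δ :=
  norm_le_sqrt_card_mul hδ (abs_mv_apply_le hM hp)

lemma abs_ciInf_sub_ciInf_le {ι : Type*} {f g : ι → ℝ} {c : ℝ} (hc : 0 ≤ c)
    (hf : BddBelow (Set.range f)) (hg : BddBelow (Set.range g)) (h : ∀ i, |f i - g i| ≤ c) :
    |(⨅ i, f i) - ⨅ i, g i| ≤ c := by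
  rcases isEmpty_or_nonempty ι with hι | hι
  -- over an empty index both infima are the junk value `sInf ∅`
  · simpa [iInf_of_isEmpty] using hc
  have hfg := le_ciInf fun i => show (⨅ i, f i) - c ≤ g i by
    linarith [ciInf_le hf i, (abs_le.1 (h i)).2]
  have hgf := le_ciInf fun i => show (⨅ i, g i) - c ≤ f i by
    linarith [ciInf_le hg i, (abs_le.1 (h i)).1]
  exact abs_sub_le_iff.2 ⟨by linarith, by linarith⟩

theorem IsMinOn.inner_gradient_sub_nonneg {F : Type*} [NormedAddCommGroup F]
    [InnerProductSpace ℝ F] [CompleteSpace F] {f : F → ℝ} {s : Set F} {x y g : F}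
    (h : IsMinOn f s x) (hs : Convex ℝ s) (hx : x ∈ s) (hy : y ∈ s) (hf : HasGradientAt f g x) :
    0 ≤ ⟪g, y - x⟫_ℝ := by
  simpa using h.localize.hasFDerivWithinAt_nonneg
    (hasGradientAt_iff_hasFDerivAt.1 hf).hasFDerivWithinAt
    (sub_mem_posTangentConeAt_of_segment_subset (hs.segment_subset hx hy))

lemma hasGradientAt_inner_add {F : Type*} [NormedAddCommGroup F] [InnerProductSpace ℝ F]
    [CompleteSpace F] {f : F → ℝ} {v g x : F} (c : ℝ) (hf : HasGradientAt f g x) :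
    HasGradientAt (fun y => ⟪v, y⟫_ℝ + c + f y) (v + g) x := by
  rw [hasGradientAt_iff_hasFDerivAt] at hf ⊢
  rw [map_add]
  exact ((toDual ℝ F v).hasFDerivAt.add_const c).add hf

lemma HasGradientAt.const_mul {F : Type*} [NormedAddCommGroup F] [InnerProductSpace ℝ F]
    [CompleteSpace F] {f : F → ℝ} {g x : F} (c : ℝ) (hf : HasGradientAt f g x) :
    HasGradientAt (fun y => c * f y) (c • g) x := by
  rw [hasGradientAt_iff_hasFDerivAt] at hf ⊢
  rw [map_smul]
  exact hf.const_mul c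

def Joint.swap {a₁ a₂ : ℕ} (z : Joint a₁ a₂) : Joint a₂ a₁ := (z.2.1, z.1, z.2.2.2, z.2.2.1)

section Game

variable {a₁ a₂ : ℕ} {ε₁ ε₂ : ℝ} {ν₁ : Vec a₁ → ℝ} {ν₂ : Vec a₂ → ℝ}
  {D₁ : Vec a₂ → Vec a₂ → ℝ} {D₂ : Vec a₁ → Vec a₁ → ℝ}
  {R₁ R₁' : Matrix (Fin a₁) (Fin a₂) ℝ} {R₂ R₂' : Matrix (Fin a₂) (Fin a₁) ℝ} {z z' : Joint a₁ a₂}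

lemma J2_eq_J1_swap : J2 ε₂ ν₂ D₂ R₂ z = J1 ε₂ ν₂ D₂ R₂ z.swap := rfl

lemma Fop_swap :
    Fop ε₂ ε₁ ν₂ ν₁ D₂ D₁ R₂ R₁ z.swap = (Fop ε₁ ε₂ ν₁ ν₂ D₁ D₂ R₁ R₂ z).swap := rfl

lemma IsNash.swap (hz : IsNash ε₁ ε₂ ν₁ ν₂ D₁ D₂ R₁ R₂ z) :
    IsNash ε₂ ε₁ ν₂ ν₁ D₂ D₁ R₂ R₁ z.swap :=
  let ⟨⟨h₁, h₂, h₃, h₄⟩, n₁, n₂, n₃, n₄⟩ := hz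
  ⟨⟨h₂, h₁, h₄, h₃⟩, n₂, n₁, n₄, n₃⟩

lemma jip_sub_right (u a b : Joint a₁ a₂) : jip u (a - b) = jip u a - jip u b := by
  simp only [jip, Prod.fst_sub, Prod.snd_sub, inner_sub_right]
  ring

lemma jip_neg_left (u a : Joint a₁ a₂) : jip (-u) a = -jip u a := by
  simp only [jip, Prod.fst_neg, Prod.snd_neg, inner_neg_left]
  ring

lemma norm_le_sqrt_jnormSq (u : Joint a₁ a₂) :
    ‖u.1‖ ≤ √(jnormSq u) ∧ ‖u.2.1‖ ≤ √(jnormSq u) ∧ ‖u.2.2.1‖ ≤ √(jnormSq u)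
      ∧ ‖u.2.2.2‖ ≤ √(jnormSq u) := by
  have := sq_nonneg ‖u.1‖; have := sq_nonneg ‖u.2.1‖
  have := sq_nonneg ‖u.2.2.1‖; have := sq_nonneg ‖u.2.2.2‖
  refine ⟨?_, ?_, ?_, ?_⟩ <;> exact Real.le_sqrt_of_sq_le (by unfold jnormSq; linarith)

lemma jip_le_sqrt_jnormSq_mul (u : Joint a₁ a₂) {v₁ : Vec a₁} {v₂ v₃ : Vec a₂} {v₄ : Vec a₁}
    {b₁ b₂ b₃ b₄ : ℝ} (h₁ : ‖v₁‖ ≤ b₁) (h₂ : ‖v₂‖ ≤ b₂) (h₃ : ‖v₃‖ ≤ b₃) (h₄ : ‖v₄‖ ≤ b₄) :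
    jip u (v₁, v₂, v₃, v₄) ≤ √(jnormSq u) * (b₁ + b₂ + b₃ + b₄) := by
  have key {n : ℕ} {x y : Vec n} {b : ℝ} (hx : ‖x‖ ≤ √(jnormSq u)) (hy : ‖y‖ ≤ b) :
      ⟪x, y⟫_ℝ ≤ √(jnormSq u) * b :=
    (real_inner_le_norm x y).trans (mul_le_mul hx hy (norm_nonneg y) (Real.sqrt_nonneg _))
  obtain ⟨u₁, u₂, u₃, u₄⟩ := norm_le_sqrt_jnormSq u
  have := key u₁ h₁; have := key u₂ h₂; have := key u₃ h₃; have := key u₄ h₄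
  unfold jip
  linarith

lemma Fop_sub_Fop :
    Fop ε₁ ε₂ ν₁ ν₂ D₁ D₂ R₁' R₂' z - Fop ε₁ ε₂ ν₁ ν₂ D₁ D₂ R₁ R₂ z
      = (mv (R₁ - R₁') z.2.2.1, mv (R₂ - R₂') z.2.2.2,
         mv (R₁' - R₁).transpose z.1, mv (R₂' - R₂).transpose z.2.1) := by
  simp only [Fop, Prod.mk_sub_mk, Matrix.transpose_sub, mv_sub]
  refine Prod.ext ?_ (Prod.ext ?_ (Prod.ext ?_ ?_)) <;> dsimp only <;> abel

lemma IsNash.inner_fst_sub_nonneg (hν₁ : Differentiable ℝ ν₁)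
    (hz : IsNash ε₁ ε₂ ν₁ ν₂ D₁ D₂ R₁ R₂ z) {q : Vec a₁} (hq : q ∈ Δ a₁) :
    0 ≤ ⟪(Fop ε₁ ε₂ ν₁ ν₂ D₁ D₂ R₁ R₂ z).1, q - z.1⟫_ℝ := by
  have hgrad : HasGradientAt (fun π => J1 ε₁ ν₁ D₁ R₁ (π, z.2))
      (Fop ε₁ ε₂ ν₁ ν₂ D₁ D₂ R₁ R₂ z).1 z.1 := by
    convert hasGradientAt_inner_add (v := -mv R₁ z.2.2.1) (-D₁ z.2.2.1 z.2.1)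
      ((hν₁ z.1).hasGradientAt.const_mul ε₁) using 1
    · ext π
      simp only [J1]
      rw [inner_neg_left, real_inner_comm]
      ring
    · rfl
  exact IsMinOn.inner_gradient_sub_nonneg (f := fun π => J1 ε₁ ν₁ D₁ R₁ (π, z.2))
    (fun q hq => hz.2.1 q hq) (convex_Δ a₁) hz.1.1 hq hgrad

lemma IsNash.inner_thd_sub_nonneg
    (hD₁ : Differentiable ℝ (fun x : Vec a₂ × Vec a₂ => D₁ x.1 x.2))
    (hz : IsNash ε₁ ε₂ ν₁ ν₂ D₁ D₂ R₁ R₂ z) {q : Vec a₂} (hq : q ∈ Δ a₂) :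
    0 ≤ ⟪(Fop ε₁ ε₂ ν₁ ν₂ D₁ D₂ R₁ R₂ z).2.2.1, q - z.2.2.1⟫_ℝ := by
  have hD : DifferentiableAt ℝ (fun p => D₁ p z.2.1) z.2.2.1 :=
    (hD₁ _).comp z.2.2.1 (differentiableAt_id.prodMk (differentiableAt_const z.2.1))
  have hgrad : HasGradientAt (fun p => -J1 ε₁ ν₁ D₁ R₁ (z.1, z.2.1, p, z.2.2.2))
      (Fop ε₁ ε₂ ν₁ ν₂ D₁ D₂ R₁ R₂ z).2.2.1 z.2.2.1 := by
    convert hasGradientAt_inner_add (v := mv R₁.transpose z.1) (-(ε₁ * ν₁ z.1)) hD.hasGradientAt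
      using 1
    · ext p
      simp only [J1]
      rw [real_inner_mv_transpose]
      ring
    · rfl
  exact IsMinOn.inner_gradient_sub_nonneg (f := fun p => -J1 ε₁ ν₁ D₁ R₁ (z.1, z.2.1, p, z.2.2.2))
    (fun q hq => hz.2.2.2.1 q hq) (convex_Δ a₂) hz.1.2.2.1 hq hgrad

lemma IsNash.jip_sub_nonneg (hν₁ : Differentiable ℝ ν₁) (hν₂ : Differentiable ℝ ν₂)
    (hD₁ : Differentiable ℝ (fun x : Vec a₂ × Vec a₂ => D₁ x.1 x.2))
    (hD₂ : Differentiable ℝ (fun x : Vec a₁ × Vec a₁ => D₂ x.1 x.2))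
    (hz : IsNash ε₁ ε₂ ν₁ ν₂ D₁ D₂ R₁ R₂ z) {w : Joint a₁ a₂} (hw : inZ w) :
    0 ≤ jip (w - z) (Fop ε₁ ε₂ ν₁ ν₂ D₁ D₂ R₁ R₂ z) := by
  have h₁ := hz.inner_fst_sub_nonneg hν₁ hw.1
  have h₂ := hz.swap.inner_fst_sub_nonneg hν₂ hw.2.1
  have h₃ := hz.inner_thd_sub_nonneg hD₁ hw.2.2.1
  have h₄ := hz.swap.inner_thd_sub_nonneg hD₂ hw.2.2.2
  rw [Fop_swap] at h₂ h₄
  simp only [jip, Prod.fst_sub, Prod.snd_sub]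
  rw [real_inner_comm] at h₁ h₂ h₃ h₄
  exact add_nonneg (add_nonneg (add_nonneg h₁ h₂) h₃) h₄

theorem IsNash.sqrt_jnormSq_sub_le {α δ : ℝ} (hα : 0 < α) (hδ : 0 ≤ δ)
    (hν₁ : Differentiable ℝ ν₁) (hν₂ : Differentiable ℝ ν₂)
    (hD₁ : Differentiable ℝ (fun x : Vec a₂ × Vec a₂ => D₁ x.1 x.2))
    (hD₂ : Differentiable ℝ (fun x : Vec a₁ × Vec a₁ => D₂ x.1 x.2))
    (hmono : StronglyMonotoneOnZ α ε₁ ε₂ ν₁ ν₂ D₁ D₂ R₁ R₂)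
    (hz : IsNash ε₁ ε₂ ν₁ ν₂ D₁ D₂ R₁ R₂ z) (hz' : IsNash ε₁ ε₂ ν₁ ν₂ D₁ D₂ R₁' R₂' z')
    (h₁ : ∀ k j, |R₁ k j - R₁' k j| ≤ δ) (h₂ : ∀ k j, |R₂ k j - R₂' k j| ≤ δ) :
    √(jnormSq (z - z')) ≤ 2 * (√a₁ + √a₂) * δ / α := by
  set s := jnormSq (z - z')
  have e₁ : ∀ k j, |(R₁ - R₁') k j| ≤ δ := fun k j => by rw [Matrix.sub_apply]; exact h₁ k j
  have e₂ : ∀ k j, |(R₂ - R₂') k j| ≤ δ := fun k j => by rw [Matrix.sub_apply]; exact h₂ k j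
  have e₁' : ∀ k j, |(R₁' - R₁).transpose k j| ≤ δ := fun k j => by
    rw [Matrix.transpose_apply, Matrix.sub_apply, abs_sub_comm]; exact h₁ j k
  have e₂' : ∀ k j, |(R₂' - R₂).transpose k j| ≤ δ := fun k j => by
    rw [Matrix.transpose_apply, Matrix.sub_apply, abs_sub_comm]; exact h₂ j k
  have hvi : jip (z - z') (Fop ε₁ ε₂ ν₁ ν₂ D₁ D₂ R₁ R₂ z) ≤ 0 := by
    have := hz.jip_sub_nonneg hν₁ hν₂ hD₁ hD₂ hz'.1
    rw [← neg_sub, jip_neg_left] at this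
    linarith
  have hvi' := hz'.jip_sub_nonneg hν₁ hν₂ hD₁ hD₂ hz.1
  have hperturb : jip (z - z')
      (Fop ε₁ ε₂ ν₁ ν₂ D₁ D₂ R₁' R₂' z' - Fop ε₁ ε₂ ν₁ ν₂ D₁ D₂ R₁ R₂ z')
      ≤ √s * (2 * (√a₁ + √a₂) * δ) := by
    rw [Fop_sub_Fop]
    refine (jip_le_sqrt_jnormSq_mul _ (norm_mv_le hδ e₁ hz'.1.2.2.1)
      (norm_mv_le hδ e₂ hz'.1.2.2.2) (norm_mv_le hδ e₁' hz'.1.1)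
      (norm_mv_le hδ e₂' hz'.1.2.1)).trans_eq ?_
    ring
  have hαs : α * (√s * √s) ≤ √s * (2 * (√a₁ + √a₂) * δ) := by
    rw [Real.mul_self_sqrt (by unfold s jnormSq; positivity)]
    have := hmono z z' hz.1 hz'.1
    rw [jip_sub_right] at this hperturb
    linarith
  rw [le_div_iff₀ hα]
  rcases (Real.sqrt_nonneg s).eq_or_lt with h0 | h0
  · rw [← h0, zero_mul]; positivity
  · nlinarith

lemma IsNash.J1_le_add {L δ : ℝ}
    (htri : ∀ x ∈ Δ a₂, ∀ y ∈ Δ a₂, ∀ w ∈ Δ a₂, D₁ x w ≤ D₁ x y + D₁ y w)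
    (hlip : ∀ x ∈ Δ a₂, ∀ y ∈ Δ a₂, D₁ x y ≤ L * ‖x - y‖)
    (hz : IsNash ε₁ ε₂ ν₁ ν₂ D₁ D₂ R₁ R₂ z) (hz' : IsNash ε₁ ε₂ ν₁ ν₂ D₁ D₂ R₁' R₂' z')
    (h₁ : ∀ k j, |R₁ k j - R₁' k j| ≤ δ) :
    J1 ε₁ ν₁ D₁ R₁ z ≤ J1 ε₁ ν₁ D₁ R₁' z' + δ + L * ‖z.2.1 - z'.2.1‖ := by
  have hplayer := hz.2.1 z'.1 hz'.1.1
  have hadversary := hz'.2.2.2.1 z.2.2.1 hz.1.2.2.1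
  have hpay := abs_inner_mv_le (M := R₁ - R₁')
    (fun k j => by rw [Matrix.sub_apply]; exact h₁ k j) hz'.1.1 hz.1.2.2.1
  have htri' := htri z.2.2.1 hz.1.2.2.1 z.2.1 hz.1.2.1 z'.2.1 hz'.1.2.1
  have hlip' := hlip z.2.1 hz.1.2.1 z'.2.1 hz'.1.2.1
  rw [mv_sub, inner_sub_right] at hpay
  simp only [J1] at hplayer hadversary ⊢
  linarith [(abs_le.1 hpay).1]

lemma IsNash.abs_J1_sub_le {L δ : ℝ}
    (htri : ∀ x ∈ Δ a₂, ∀ y ∈ Δ a₂, ∀ w ∈ Δ a₂, D₁ x w ≤ D₁ x y + D₁ y w)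
    (hlip : ∀ x ∈ Δ a₂, ∀ y ∈ Δ a₂, D₁ x y ≤ L * ‖x - y‖)
    (hz : IsNash ε₁ ε₂ ν₁ ν₂ D₁ D₂ R₁ R₂ z) (hz' : IsNash ε₁ ε₂ ν₁ ν₂ D₁ D₂ R₁' R₂' z')
    (h₁ : ∀ k j, |R₁ k j - R₁' k j| ≤ δ) :
    |J1 ε₁ ν₁ D₁ R₁ z - J1 ε₁ ν₁ D₁ R₁' z'| ≤ δ + L * ‖z.2.1 - z'.2.1‖ := by
  have h := hz.J1_le_add htri hlip hz' h₁
  have h' := hz'.J1_le_add htri hlip hz fun k j => by rw [abs_sub_comm]; exact h₁ k j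
  rw [norm_sub_rev] at h'
  exact abs_sub_le_iff.2 ⟨by linarith, by linarith⟩

lemma IsNash.abs_J2_sub_le {L δ : ℝ}
    (htri : ∀ x ∈ Δ a₁, ∀ y ∈ Δ a₁, ∀ w ∈ Δ a₁, D₂ x w ≤ D₂ x y + D₂ y w)
    (hlip : ∀ x ∈ Δ a₁, ∀ y ∈ Δ a₁, D₂ x y ≤ L * ‖x - y‖)
    (hz : IsNash ε₁ ε₂ ν₁ ν₂ D₁ D₂ R₁ R₂ z) (hz' : IsNash ε₁ ε₂ ν₁ ν₂ D₁ D₂ R₁' R₂' z')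
    (h₂ : ∀ k j, |R₂ k j - R₂' k j| ≤ δ) :
    |J2 ε₂ ν₂ D₂ R₂ z - J2 ε₂ ν₂ D₂ R₂' z'| ≤ δ + L * ‖z.1 - z'.1‖ := by
  have h := hz.swap.abs_J1_sub_le htri hlip hz'.swap h₂
  rwa [← J2_eq_J1_swap, ← J2_eq_J1_swap] at h

theorem IsNash.abs_J_sub_le {α L δ : ℝ} (hα : 0 < α) (hL : 0 ≤ L) (hδ : 0 ≤ δ)
    (hν₁ : Differentiable ℝ ν₁) (hν₂ : Differentiable ℝ ν₂)
    (hD₁ : Differentiable ℝ (fun x : Vec a₂ × Vec a₂ => D₁ x.1 x.2))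
    (hD₂ : Differentiable ℝ (fun x : Vec a₁ × Vec a₁ => D₂ x.1 x.2))
    (hmono : StronglyMonotoneOnZ α ε₁ ε₂ ν₁ ν₂ D₁ D₂ R₁ R₂)
    (hD₁tri : ∀ x ∈ Δ a₂, ∀ y ∈ Δ a₂, ∀ w ∈ Δ a₂, D₁ x w ≤ D₁ x y + D₁ y w)
    (hD₂tri : ∀ x ∈ Δ a₁, ∀ y ∈ Δ a₁, ∀ w ∈ Δ a₁, D₂ x w ≤ D₂ x y + D₂ y w)
    (hD₁lip : ∀ x ∈ Δ a₂, ∀ y ∈ Δ a₂, D₁ x y ≤ L * ‖x - y‖)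
    (hD₂lip : ∀ x ∈ Δ a₁, ∀ y ∈ Δ a₁, D₂ x y ≤ L * ‖x - y‖)
    (hz : IsNash ε₁ ε₂ ν₁ ν₂ D₁ D₂ R₁ R₂ z) (hz' : IsNash ε₁ ε₂ ν₁ ν₂ D₁ D₂ R₁' R₂' z')
    (h₁ : ∀ k j, |R₁ k j - R₁' k j| ≤ δ) (h₂ : ∀ k j, |R₂ k j - R₂' k j| ≤ δ) :
    |J1 ε₁ ν₁ D₁ R₁ z - J1 ε₁ ν₁ D₁ R₁' z'| ≤ (1 + 2 * L * (√a₁ + √a₂) / α) * δ ∧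
      |J2 ε₂ ν₂ D₂ R₂ z - J2 ε₂ ν₂ D₂ R₂' z'| ≤ (1 + 2 * L * (√a₁ + √a₂) / α) * δ := by
  have hdist := hz.sqrt_jnormSq_sub_le hα hδ hν₁ hν₂ hD₁ hD₂ hmono hz' h₁ h₂
  obtain ⟨hπ₁, hπ₂, -, -⟩ := norm_le_sqrt_jnormSq (z - z')
  have hB : δ + L * (2 * (√a₁ + √a₂) * δ / α) = (1 + 2 * L * (√a₁ + √a₂) / α) * δ := by ring
  constructor
  · refine (hz.abs_J1_sub_le hD₁tri hD₁lip hz' h₁).trans (hB ▸ ?_)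
    gcongr
    exact hπ₂.trans hdist
  · refine (hz.abs_J2_sub_le hD₂tri hD₂lip hz' h₂).trans (hB ▸ ?_)
    gcongr
    exact hπ₁.trans hdist

end Game

lemma bddBelow_range_neg_expectation_add {S : Type*} [Fintype S] (V : S → ℝ)
    {Denv : (S → ℝ) → (S → ℝ) → ℝ} {y : S → ℝ}
    (hbdd : BddBelow ((fun Pt => Denv Pt y) '' stdSimplex ℝ S)) :
    BddBelow (Set.range fun Pt : stdSimplex ℝ S => -(∑ s, (Pt : S → ℝ) s * V s) + Denv Pt y) := by
  obtain ⟨b, hb⟩ := hbdd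
  refine ⟨-(∑ s, |V s|) + b, ?_⟩
  rintro _ ⟨Pt, rfl⟩
  have hV : |∑ s, (Pt : S → ℝ) s * V s| ≤ ∑ s, |V s| :=
    abs_sum_mul_le_of_sum_eq_one Pt.2.1 Pt.2.2 fun s =>
      Finset.single_le_sum (f := fun s => |V s|) (fun _ _ => abs_nonneg _) (Finset.mem_univ s)
  linarith [(abs_le.1 hV).2, hb ⟨Pt, Pt.2, rfl⟩]

lemma abs_robustBellman_sub_le {S : Type*} [Fintype S] (r : ℝ) {γ c : ℝ} (hγ : 0 ≤ γ)
    (hc : 0 ≤ c) {V V' : S → ℝ} (hV : ∀ s, |V s - V' s| ≤ c)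
    {Denv : (S → ℝ) → (S → ℝ) → ℝ} {y : S → ℝ}
    (hbdd : BddBelow ((fun Pt => Denv Pt y) '' stdSimplex ℝ S)) :
    |(r + γ * ⨅ Pt : stdSimplex ℝ S, (-(∑ s, (Pt : S → ℝ) s * V s) + Denv Pt y))
      - (r + γ * ⨅ Pt : stdSimplex ℝ S, (-(∑ s, (Pt : S → ℝ) s * V' s) + Denv Pt y))|
      ≤ γ * c := by
  rw [add_sub_add_left_eq_sub, ← mul_sub, abs_mul, abs_of_nonneg hγ]
  refine mul_le_mul_of_nonneg_left (abs_ciInf_sub_ciInf_le hc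
    (bddBelow_range_neg_expectation_add V hbdd) (bddBelow_range_neg_expectation_add V' hbdd)
    fun Pt => ?_) hγ
  have hdiff : -(∑ s, (Pt : S → ℝ) s * V s) + Denv Pt y
      - (-(∑ s, (Pt : S → ℝ) s * V' s) + Denv Pt y)
      = ∑ s, (Pt : S → ℝ) s * (V' s - V s) := by
    simp only [mul_sub, Finset.sum_sub_distrib]
    ring
  rw [hdiff]
  exact abs_sum_mul_le_of_sum_eq_one Pt.2.1 Pt.2.2 fun s => by rw [abs_sub_comm]; exact hV s

theorem rqBellman_lipschitz {a₁ a₂ : ℕ} {S : Type*} [Fintype S] {ε₁ ε₂ α L γ : ℝ}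
    {ν₁ : Vec a₁ → ℝ} {ν₂ : Vec a₂ → ℝ} {D₁ : Vec a₂ → Vec a₂ → ℝ} {D₂ : Vec a₁ → Vec a₁ → ℝ}
    (hα : 0 < α) (hL : 0 ≤ L) (hγ : 0 ≤ γ)
    (hν₁ : Differentiable ℝ ν₁) (hν₂ : Differentiable ℝ ν₂)
    (hD₁ : Differentiable ℝ (fun x : Vec a₂ × Vec a₂ => D₁ x.1 x.2))
    (hD₂ : Differentiable ℝ (fun x : Vec a₁ × Vec a₁ => D₂ x.1 x.2))
    (hmono : ∀ (R₁ : Matrix (Fin a₁) (Fin a₂) ℝ) (R₂ : Matrix (Fin a₂) (Fin a₁) ℝ),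
      StronglyMonotoneOnZ α ε₁ ε₂ ν₁ ν₂ D₁ D₂ R₁ R₂)
    (hD₁tri : ∀ x ∈ Δ a₂, ∀ y ∈ Δ a₂, ∀ w ∈ Δ a₂, D₁ x w ≤ D₁ x y + D₁ y w)
    (hD₂tri : ∀ x ∈ Δ a₁, ∀ y ∈ Δ a₁, ∀ w ∈ Δ a₁, D₂ x w ≤ D₂ x y + D₂ y w)
    (hD₁lip : ∀ x ∈ Δ a₂, ∀ y ∈ Δ a₂, D₁ x y ≤ L * ‖x - y‖)
    (hD₂lip : ∀ x ∈ Δ a₁, ∀ y ∈ Δ a₁, D₂ x y ≤ L * ‖x - y‖)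
    {ρ : Matrix (Fin a₁) (Fin a₂) ℝ → Matrix (Fin a₂) (Fin a₁) ℝ → Joint a₁ a₂}
    (hρ : ∀ R₁ R₂, IsNash ε₁ ε₂ ν₁ ν₂ D₁ D₂ R₁ R₂ (ρ R₁ R₂))
    (r₁ r₂ : S × (Fin a₁ × Fin a₂) → ℝ) (P : S × (Fin a₁ × Fin a₂) → S → ℝ)
    {D₁env D₂env : (S → ℝ) → (S → ℝ) → ℝ}
    (hD₁env : ∀ y : S → ℝ, BddBelow ((fun Pt => D₁env Pt y) '' stdSimplex ℝ S))
    (hD₂env : ∀ y : S → ℝ, BddBelow ((fun Pt => D₂env Pt y) '' stdSimplex ℝ S))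
    (Q Q' : (S × (Fin a₁ × Fin a₂) → ℝ) × (S × (Fin a₁ × Fin a₂) → ℝ)) :
    ‖rqBellman ε₁ ε₂ ν₁ ν₂ D₁ D₂ ρ γ r₁ r₂ P D₁env D₂env Q
        - rqBellman ε₁ ε₂ ν₁ ν₂ D₁ D₂ ρ γ r₁ r₂ P D₁env D₂env Q'‖
      ≤ γ * (1 + 2 * L * (√a₁ + √a₂) / α) * ‖Q - Q'‖ := by
  set K := 1 + 2 * L * (√a₁ + √a₂) / α
  set d := ‖Q - Q'‖
  have hK : 0 ≤ K := by positivity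
  have hQ₁ : ∀ sa, |Q.1 sa - Q'.1 sa| ≤ d := fun sa =>
    (norm_le_pi_norm (Q - Q').1 sa).trans (norm_fst_le _)
  have hQ₂ : ∀ sa, |Q.2 sa - Q'.2 sa| ≤ d := fun sa =>
    (norm_le_pi_norm (Q - Q').2 sa).trans (norm_snd_le _)
  have hRQE (s : S) := (hρ (QtoR1 Q s) (QtoR2 Q s)).abs_J_sub_le hα hL (norm_nonneg _)
    hν₁ hν₂ hD₁ hD₂ (hmono _ _) hD₁tri hD₂tri hD₁lip hD₂lip (hρ (QtoR1 Q' s) (QtoR2 Q' s))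
    (fun k j => hQ₁ (s, k, j)) (fun j k => hQ₂ (s, k, j))
  rw [Prod.norm_def, mul_assoc]
  refine max_le ((pi_norm_le_iff_of_nonneg (by positivity)).2 fun sa => ?_)
    ((pi_norm_le_iff_of_nonneg (by positivity)).2 fun sa => ?_)
  · exact abs_robustBellman_sub_le (r₁ sa) hγ (by positivity) (fun s => (hRQE s).1) (hD₁env (P sa))
  · exact abs_robustBellman_sub_le (r₂ sa) hγ (by positivity) (fun s => (hRQE s).2) (hD₂env (P sa))

theorem rqBellman_contraction_general
    {a₁ a₂ : ℕ}
    {S : Type*} [Fintype S]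
    (ε₁ ε₂ : ℝ) (α L : ℝ) (hα : 0 < α) (hL : 0 ≤ L)
    (ν₁ : Vec a₁ → ℝ) (ν₂ : Vec a₂ → ℝ)
    (D₁ : Vec a₂ → Vec a₂ → ℝ) (D₂ : Vec a₁ → Vec a₁ → ℝ)
    (hν₁ : Differentiable ℝ ν₁) (hν₂ : Differentiable ℝ ν₂)
    (hD₁ : Differentiable ℝ (fun x : Vec a₂ × Vec a₂ => D₁ x.1 x.2))
    (hD₂ : Differentiable ℝ (fun x : Vec a₁ × Vec a₁ => D₂ x.1 x.2))
    -- (i) strong monotonicity for every payoff pair: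
    (hmono : ∀ (R₁ : Matrix (Fin a₁) (Fin a₂) ℝ) (R₂ : Matrix (Fin a₂) (Fin a₁) ℝ),
      StronglyMonotoneOnZ α ε₁ ε₂ ν₁ ν₂ D₁ D₂ R₁ R₂)
    -- (ii) each `Dᵢ` is a symmetric, triangle-inequality, `L`-Lipschitz penalty:
    (hD₁tri : ∀ x ∈ Δ a₂, ∀ y ∈ Δ a₂, ∀ w ∈ Δ a₂, D₁ x w ≤ D₁ x y + D₁ y w)
    (hD₂tri : ∀ x ∈ Δ a₁, ∀ y ∈ Δ a₁, ∀ w ∈ Δ a₁, D₂ x w ≤ D₂ x y + D₂ y w)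
    (hD₁lip : ∀ x ∈ Δ a₂, ∀ y ∈ Δ a₂, D₁ x y ≤ L * ‖x - y‖)
    (hD₂lip : ∀ x ∈ Δ a₁, ∀ y ∈ Δ a₁, D₂ x y ≤ L * ‖x - y‖)
    -- (iii) `ρ` selects a Nash equilibrium for every payoff pair:
    (ρ : Matrix (Fin a₁) (Fin a₂) ℝ → Matrix (Fin a₂) (Fin a₁) ℝ → Joint a₁ a₂)
    (hρ : ∀ R₁ R₂, IsNash ε₁ ε₂ ν₁ ν₂ D₁ D₂ R₁ R₂ (ρ R₁ R₂))
    -- the Markov game data: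
    (γ : ℝ) (hγ0 : 0 ≤ γ)
    (r₁ r₂ : S × (Fin a₁ × Fin a₂) → ℝ)
    (P : S × (Fin a₁ × Fin a₂) → S → ℝ)
    (D₁env D₂env : (S → ℝ) → (S → ℝ) → ℝ)
    (hD₁env : ∀ y : S → ℝ, BddBelow ((fun Pt => D₁env Pt y) '' stdSimplex ℝ S))
    (hD₂env : ∀ y : S → ℝ, BddBelow ((fun Pt => D₂env Pt y) '' stdSimplex ℝ S)) :
    (∀ Q Q' : (S × (Fin a₁ × Fin a₂) → ℝ) × (S × (Fin a₁ × Fin a₂) → ℝ),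
        ‖rqBellman ε₁ ε₂ ν₁ ν₂ D₁ D₂ ρ γ r₁ r₂ P D₁env D₂env Q
            - rqBellman ε₁ ε₂ ν₁ ν₂ D₁ D₂ ρ γ r₁ r₂ P D₁env D₂env Q'‖
          ≤ γ * (1 + 2 * L * (Real.sqrt a₁ + Real.sqrt a₂) / α) * ‖Q - Q'‖)
    ∧ (γ ≤ α / (α + 2 * L * (Real.sqrt a₁ + Real.sqrt a₂)) →
        ∀ Q Q' : (S × (Fin a₁ × Fin a₂) → ℝ) × (S × (Fin a₁ × Fin a₂) → ℝ),
          ‖rqBellman ε₁ ε₂ ν₁ ν₂ D₁ D₂ ρ γ r₁ r₂ P D₁env D₂env Q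
              - rqBellman ε₁ ε₂ ν₁ ν₂ D₁ D₂ ρ γ r₁ r₂ P D₁env D₂env Q'‖
            ≤ ‖Q - Q'‖)
    ∧ (γ < α / (α + 2 * L * (Real.sqrt a₁ + Real.sqrt a₂)) →
        ∃ c : ℝ, 0 ≤ c ∧ c < 1 ∧
          ∀ Q Q' : (S × (Fin a₁ × Fin a₂) → ℝ) × (S × (Fin a₁ × Fin a₂) → ℝ),
            ‖rqBellman ε₁ ε₂ ν₁ ν₂ D₁ D₂ ρ γ r₁ r₂ P D₁env D₂env Q
                - rqBellman ε₁ ε₂ ν₁ ν₂ D₁ D₂ ρ γ r₁ r₂ P D₁env D₂env Q'‖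
              ≤ c * ‖Q - Q'‖) := by
  have hlip := rqBellman_lipschitz hα hL hγ0 hν₁ hν₂ hD₁ hD₂ hmono hD₁tri hD₂tri hD₁lip hD₂lip
    hρ r₁ r₂ P hD₁env hD₂env
  have hfactor : γ * (1 + 2 * L * (Real.sqrt a₁ + Real.sqrt a₂) / α)
      = γ * (α + 2 * L * (Real.sqrt a₁ + Real.sqrt a₂)) / α := by
    field_simp
  refine ⟨hlip, fun hγ Q Q' => (hlip Q Q').trans ?_, fun hγ => ⟨_, by positivity, ?_, hlip⟩⟩
  · refine mul_le_of_le_one_left (norm_nonneg _) ?_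
    rw [hfactor, div_le_one hα, ← le_div_iff₀ (by positivity)]
    exact hγ
  · rw [hfactor, div_lt_one hα, ← lt_div_iff₀ (by positivity)]
    exact hγ

/-- Under `α`-strong monotonicity of the gradient operator for every
payoff pair and the symmetry/triangle/`L`-Lipschitz assumptions on `D₁, D₂`, the risk-averse
quantal-response Bellman operator satisfies
`‖T Q − T Q'‖_∞ ≤ γ (1 + 2L(√a₁ + √a₂)/α) ‖Q − Q'‖_∞`; in particular it is nonexpansive when
`γ ≤ α/(α + 2L(√a₁ + √a₂))` and a contraction when this inequality is strict. -/
theorem rqBellman_contraction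
    {a₁ a₂ : ℕ} (ha₁ : 1 ≤ a₁) (ha₂ : 1 ≤ a₂)
    {S : Type*} [Fintype S] [Nonempty S]
    (ε₁ ε₂ : ℝ) (hε₁ : 0 < ε₁) (hε₂ : 0 < ε₂) (α L : ℝ) (hα : 0 < α) (hL : 0 ≤ L)
    (ν₁ : Vec a₁ → ℝ) (ν₂ : Vec a₂ → ℝ)
    (D₁ : Vec a₂ → Vec a₂ → ℝ) (D₂ : Vec a₁ → Vec a₁ → ℝ)
    (hν₁ : Differentiable ℝ ν₁) (hν₂ : Differentiable ℝ ν₂)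
    (hD₁ : Differentiable ℝ (fun x : Vec a₂ × Vec a₂ => D₁ x.1 x.2))
    (hD₂ : Differentiable ℝ (fun x : Vec a₁ × Vec a₁ => D₂ x.1 x.2))
    -- (i) strong monotonicity for every payoff pair:
    (hmono : ∀ (R₁ : Matrix (Fin a₁) (Fin a₂) ℝ) (R₂ : Matrix (Fin a₂) (Fin a₁) ℝ),
      StronglyMonotoneOnZ α ε₁ ε₂ ν₁ ν₂ D₁ D₂ R₁ R₂)
    -- (ii) each `Dᵢ` is a symmetric, triangle-inequality, `L`-Lipschitz penalty:
    (hD₁symm : ∀ x ∈ Δ a₂, ∀ y ∈ Δ a₂, D₁ x y = D₁ y x)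
    (hD₂symm : ∀ x ∈ Δ a₁, ∀ y ∈ Δ a₁, D₂ x y = D₂ y x)
    (hD₁tri : ∀ x ∈ Δ a₂, ∀ y ∈ Δ a₂, ∀ w ∈ Δ a₂, D₁ x w ≤ D₁ x y + D₁ y w)
    (hD₂tri : ∀ x ∈ Δ a₁, ∀ y ∈ Δ a₁, ∀ w ∈ Δ a₁, D₂ x w ≤ D₂ x y + D₂ y w)
    (hD₁lip : ∀ x ∈ Δ a₂, ∀ y ∈ Δ a₂, D₁ x y ≤ L * ‖x - y‖)
    (hD₂lip : ∀ x ∈ Δ a₁, ∀ y ∈ Δ a₁, D₂ x y ≤ L * ‖x - y‖)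
    -- (iii) `ρ` selects a Nash equilibrium for every payoff pair:
    (ρ : Matrix (Fin a₁) (Fin a₂) ℝ → Matrix (Fin a₂) (Fin a₁) ℝ → Joint a₁ a₂)
    (hρ : ∀ R₁ R₂, IsNash ε₁ ε₂ ν₁ ν₂ D₁ D₂ R₁ R₂ (ρ R₁ R₂))
    -- the Markov game data:
    (γ : ℝ) (hγ0 : 0 ≤ γ) (hγ1 : γ < 1)
    (r₁ r₂ : S × (Fin a₁ × Fin a₂) → ℝ)
    (P : S × (Fin a₁ × Fin a₂) → S → ℝ) (hP : ∀ sa, P sa ∈ stdSimplex ℝ S)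
    (D₁env D₂env : (S → ℝ) → (S → ℝ) → ℝ)
    (hD₁env : ∀ y : S → ℝ, BddBelow ((fun Pt => D₁env Pt y) '' stdSimplex ℝ S))
    (hD₂env : ∀ y : S → ℝ, BddBelow ((fun Pt => D₂env Pt y) '' stdSimplex ℝ S)) :
    (∀ Q Q' : (S × (Fin a₁ × Fin a₂) → ℝ) × (S × (Fin a₁ × Fin a₂) → ℝ),
        ‖rqBellman ε₁ ε₂ ν₁ ν₂ D₁ D₂ ρ γ r₁ r₂ P D₁env D₂env Q
            - rqBellman ε₁ ε₂ ν₁ ν₂ D₁ D₂ ρ γ r₁ r₂ P D₁env D₂env Q'‖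
          ≤ γ * (1 + 2 * L * (Real.sqrt a₁ + Real.sqrt a₂) / α) * ‖Q - Q'‖)
    ∧ (γ ≤ α / (α + 2 * L * (Real.sqrt a₁ + Real.sqrt a₂)) →
        ∀ Q Q' : (S × (Fin a₁ × Fin a₂) → ℝ) × (S × (Fin a₁ × Fin a₂) → ℝ),
          ‖rqBellman ε₁ ε₂ ν₁ ν₂ D₁ D₂ ρ γ r₁ r₂ P D₁env D₂env Q
              - rqBellman ε₁ ε₂ ν₁ ν₂ D₁ D₂ ρ γ r₁ r₂ P D₁env D₂env Q'‖
            ≤ ‖Q - Q'‖)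
    ∧ (γ < α / (α + 2 * L * (Real.sqrt a₁ + Real.sqrt a₂)) →
        ∃ c : ℝ, 0 ≤ c ∧ c < 1 ∧
          ∀ Q Q' : (S × (Fin a₁ × Fin a₂) → ℝ) × (S × (Fin a₁ × Fin a₂) → ℝ),
            ‖rqBellman ε₁ ε₂ ν₁ ν₂ D₁ D₂ ρ γ r₁ r₂ P D₁env D₂env Q
                - rqBellman ε₁ ε₂ ν₁ ν₂ D₁ D₂ ρ γ r₁ r₂ P D₁env D₂env Q'‖
              ≤ c * ‖Q - Q'‖) :=
  rqBellman_contraction_general ε₁ ε₂ α L hα hL ν₁ ν₂ D₁ D₂ hν₁ hν₂ hD₁ hD₂ hmono hD₁tri hD₂tri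
    hD₁lip hD₂lip ρ hρ γ hγ0 r₁ r₂ P D₁env D₂env hD₁env hD₂env
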